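/- Let M and N be the simple cuspidal sl(2,ℂ)-modules N(a) and N(b) respectively (a,b ∈ (ℂ∖ℤ)²). If M and N are not isomorphic, then every cocycle from M to N is a coboundary; equivalently, every extension 0 → N → V → M → 0 of weight sl(2,ℂ)-modules splits. -/

import Mathlib

/-!
A cocycle `c` from `M` to `N` is the same thing as an `sl₂`-action on `N ⊕ M` by the block
operators `!![x_N, c x; 0, x_M]`, and `c` is the coboundary of `φ` exactly when conjugation by
`!![1, φ; 0, 1]` makes this action block diagonal.

If the Casimir element acts on `M` and `N` by scalars `z ≠ z'`, the off-diagonal entry `ψ` of the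
Casimir element of the extension satisfies `[x, ψ] = (z' - z) c(x)`, so `c` is the coboundary of
`(z' - z)⁻¹ ψ`. If the `H`-weights of `M` and `N` lie in different cosets of `2ℤ`, the equation
`c(H) = [H, φ]` is solved weight by weight; after subtracting the coboundary of `φ`, `c(X^±)` maps
the weight `μ` of `M` into the weight `μ ± 2` of `N`, which does not occur, so it vanishes. In the
remaining case (same coset, same Casimir value `(a₁ + a₂)(a₁ + a₂ + 2)`) either
`(b₁, b₂) = (a₁ + m, a₂ - m)` or `(b₁, b₂) = (-1 - a₂ + m, -1 - a₁ - m)`, and a map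
`x(k) ↦ s(k) x(k - m)` with `s` nowhere zero is an isomorphism `N(a) ≅ N(b)`.
-/

/-- The action of `H` on the module `N(a)` (basis `x(k) = Finsupp.single k 1`, `k ∈ ℤ`):
`H · x(k) = (a₁ - a₂ + 2k) x(k)`. -/
noncomputable def sl2H (a₁ a₂ : ℂ) : Module.End ℂ (ℤ →₀ ℂ) :=
  Finsupp.lsum ℂ fun k : ℤ => (a₁ - a₂ + 2 * (k : ℂ)) • Finsupp.lsingle k

/-- The action of `X⁺` on `N(a)`: `X⁺ · x(k) = (a₂ - k) x(k+1)`. -/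
noncomputable def sl2E (a₂ : ℂ) : Module.End ℂ (ℤ →₀ ℂ) :=
  Finsupp.lsum ℂ fun k : ℤ => (a₂ - (k : ℂ)) • Finsupp.lsingle (k + 1)

/-- The action of `X⁻` on `N(a)`: `X⁻ · x(k) = (a₁ + k) x(k-1)`. -/
noncomputable def sl2F (a₁ : ℂ) : Module.End ℂ (ℤ →₀ ℂ) :=
  Finsupp.lsum ℂ fun k : ℤ => (a₁ + (k : ℂ)) • Finsupp.lsingle (k - 1)

structure Sl2Relations {R : Type*} [Ring R] (h e f : R) : Prop where
  comm_h_e : h * e - e * h = 2 * e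
  comm_h_f : h * f - f * h = -(2 * f)
  comm_e_f : e * f - f * e = h

def casimir {R : Type*} [Ring R] (h e f : R) : R := h * h + 2 * (e * f + f * e)

namespace Sl2Relations

variable {R : Type*} [Ring R] {h e f : R}

lemma commute_casimir_h (t : Sl2Relations h e f) : Commute (casimir h e f) h := by
  rw [Commute, SemiconjBy, ← sub_eq_zero]
  calc casimir h e f * h - h * casimir h e f
      = -2 * (e * (h * f - f * h + 2 * f) + (h * e - e * h - 2 * e) * f
          + f * (h * e - e * h - 2 * e) + (h * f - f * h + 2 * f) * e) := by
        unfold casimir; noncomm_ring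
    _ = 0 := by rw [t.comm_h_e, t.comm_h_f]; noncomm_ring

lemma commute_casimir_e (t : Sl2Relations h e f) : Commute (casimir h e f) e := by
  rw [Commute, SemiconjBy, ← sub_eq_zero]
  calc casimir h e f * e - e * casimir h e f
      = h * (h * e - e * h - 2 * e) + (h * e - e * h - 2 * e) * h
        - 2 * ((e * f - f * e - h) * e + e * (e * f - f * e - h)) := by
        unfold casimir; noncomm_ring
    _ = 0 := by rw [t.comm_h_e, t.comm_e_f]; noncomm_ring

lemma commute_casimir_f (t : Sl2Relations h e f) : Commute (casimir h e f) f := by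
  rw [Commute, SemiconjBy, ← sub_eq_zero]
  calc casimir h e f * f - f * casimir h e f
      = h * (h * f - f * h + 2 * f) + (h * f - f * h + 2 * f) * h
        + 2 * ((e * f - f * e - h) * f + f * (e * f - f * e - h)) := by
        unfold casimir; noncomm_ring
    _ = 0 := by rw [t.comm_h_f, t.comm_e_f]; noncomm_ring

lemma conj (t : Sl2Relations h e f) {u v : R} (hvu : v * u = 1) :
    Sl2Relations (u * h * v) (u * e * v) (u * f * v) := by
  have hmul : ∀ x y : R, u * x * v * (u * y * v) = u * (x * y) * v := fun x y => by
    rw [show u * x * v * (u * y * v) = u * x * (v * u) * y * v by noncomm_ring, hvu]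
    noncomm_ring
  refine ⟨?_, ?_, ?_⟩ <;> rw [hmul, hmul, ← sub_mul, ← mul_sub]
  · rw [t.comm_h_e]; noncomm_ring
  · rw [t.comm_h_f]; noncomm_ring
  · rw [t.comm_e_f]

end Sl2Relations

section Extension

variable {R : Type*} [Ring R]

def extOp (x' c x : R) : Matrix (Fin 2) (Fin 2) R := !![x', c; 0, x]

section Algebra

variable {x' c x y' d y : R}

lemma extOp_inj : extOp x' c x = extOp y' d y ↔ x' = y' ∧ c = d ∧ x = y := by
  simp [extOp, and_assoc]

lemma extOp_add : extOp x' c x + extOp y' d y = extOp (x' + y') (c + d) (x + y) := by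
  simp [extOp]

lemma extOp_sub : extOp x' c x - extOp y' d y = extOp (x' - y') (c - d) (x - y) := by
  simp [extOp]

lemma neg_extOp : -extOp x' c x = extOp (-x') (-c) (-x) := by
  simp [extOp]

lemma extOp_mul : extOp x' c x * extOp y' d y = extOp (x' * y') (x' * d + c * y) (x * y) := by
  simp [extOp]

lemma two_mul_extOp : 2 * extOp x' c x = extOp (2 * x') (2 * c) (2 * x) := by
  simp [extOp, Matrix.ofNat_fin_two]

lemma one_eq_extOp : (1 : Matrix (Fin 2) (Fin 2) R) = extOp 1 0 1 := by
  simp [extOp, Matrix.one_fin_two]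

end Algebra

variable {h' e' f' H E F h e f : R}

theorem sl2Relations_extOp_iff :
    Sl2Relations (extOp h' H h) (extOp e' E e) (extOp f' F f) ↔
      Sl2Relations h' e' f' ∧ Sl2Relations h e f ∧
      2 * E = (H * e - e' * H) + (h' * E - E * h) ∧
      -(2 * F) = (H * f - f' * H) + (h' * F - F * h) ∧
      H = (E * f - f' * E) + (e' * F - F * e) := by
  constructor
  · rintro ⟨he, hf, ef⟩
    simp only [extOp_mul, extOp_sub, two_mul_extOp, neg_extOp, extOp_inj] at he hf ef
    refine ⟨⟨he.1, hf.1, ef.1⟩, ⟨he.2.2, hf.2.2, ef.2.2⟩, ?_, ?_, ?_⟩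
    · rw [← he.2.1]; abel
    · rw [← hf.2.1]; abel
    · rw [← ef.2.1]; abel
  · rintro ⟨t', t, he, hf, ef⟩
    refine ⟨?_, ?_, ?_⟩ <;>
      simp only [extOp_mul, extOp_sub, two_mul_extOp, neg_extOp, extOp_inj]
    · exact ⟨t'.comm_h_e, by rw [he]; abel, t.comm_h_e⟩
    · exact ⟨t'.comm_h_f, by rw [hf]; abel, t.comm_h_f⟩
    · exact ⟨t'.comm_e_f, by rw [ef]; abel, t.comm_e_f⟩

lemma exists_casimir_extOp (h' H h e' E e f' F f : R) :
    ∃ ψ, casimir (extOp h' H h) (extOp e' E e) (extOp f' F f) =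
      extOp (casimir h' e' f') ψ (casimir h e f) :=
  ⟨_, by simp only [casimir, extOp_mul, extOp_add, two_mul_extOp]; rfl⟩

lemma sub_eq_of_commute_extOp {p ψ q x' X x : R}
    (hc : Commute (extOp p ψ q) (extOp x' X x)) : x' * ψ - ψ * x = p * X - X * q := by
  obtain ⟨-, h01, -⟩ := extOp_inj.mp (by simpa only [extOp_mul] using hc.eq)
  rw [sub_eq_sub_iff_add_eq_add, h01, add_comm]

lemma Sl2Relations.sub_coboundary
    (hc : Sl2Relations (extOp h' H h) (extOp e' E e) (extOp f' F f)) (φ : R) :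
    Sl2Relations (extOp h' (H - (h' * φ - φ * h)) h) (extOp e' (E - (e' * φ - φ * e)) e)
      (extOp f' (F - (f' * φ - φ * f)) f) := by
  have hconj : ∀ x' X x : R,
      extOp 1 φ 1 * extOp x' X x * extOp 1 (-φ) 1 = extOp x' (X - (x' * φ - φ * x)) x := by
    intro x' X x
    simp only [extOp_mul, one_mul, mul_one, extOp_inj, true_and, and_true]
    noncomm_ring
  have hinv : extOp 1 (-φ) 1 * extOp 1 φ 1 = 1 := by
    rw [extOp_mul, one_eq_extOp]
    simp
  simpa only [hconj] using hc.conj hinv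

theorem exists_sub_eq_casimir_mul_sub
    (hc : Sl2Relations (extOp h' H h) (extOp e' E e) (extOp f' F f)) :
    ∃ ψ, h' * ψ - ψ * h = casimir h' e' f' * H - H * casimir h e f ∧
      e' * ψ - ψ * e = casimir h' e' f' * E - E * casimir h e f ∧
      f' * ψ - ψ * f = casimir h' e' f' * F - F * casimir h e f := by
  obtain ⟨ψ, hψ⟩ := exists_casimir_extOp h' H h e' E e f' F f
  refine ⟨ψ, ?_, ?_, ?_⟩ <;> apply sub_eq_of_commute_extOp <;> rw [← hψ]
  exacts [hc.commute_casimir_h, hc.commute_casimir_e, hc.commute_casimir_f]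

theorem exists_coboundary_of_casimir_ne {K : Type*} [Field K] [Algebra K R] {z z' : K}
    (hc : Sl2Relations (extOp h' H h) (extOp e' E e) (extOp f' F f))
    (hz : casimir h e f = algebraMap K R z) (hz' : casimir h' e' f' = algebraMap K R z')
    (hne : z ≠ z') :
    ∃ φ, H = h' * φ - φ * h ∧ E = e' * φ - φ * e ∧ F = f' * φ - φ * f := by
  obtain ⟨ψ, hH, hE, hF⟩ := exists_sub_eq_casimir_mul_sub hc
  have hκ : z' - z ≠ 0 := sub_ne_zero.mpr hne.symm
  have key : ∀ {x' X x : R}, x' * ψ - ψ * x = casimir h' e' f' * X - X * casimir h e f →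
      X = x' * ((z' - z)⁻¹ • ψ) - ((z' - z)⁻¹ • ψ) * x := by
    intro x' X x hX
    rw [mul_smul_comm, smul_mul_assoc, ← smul_sub, hX, hz, hz', ← Algebra.commutes,
      ← sub_mul, ← map_sub, ← Algebra.smul_def, smul_smul, inv_mul_cancel₀ hκ, one_smul]
  exact ⟨_, key hH, key hE, key hF⟩

end Extension

section Diagonal

open Finsupp

variable {ι K : Type*} [Field K]

noncomputable def diagOp (w : ι → K) : Module.End K (ι →₀ K) :=
  lsum K fun i => w i • lsingle i

@[simp]
lemma diagOp_single (w : ι → K) (i : ι) (c : K) :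
    diagOp w (single i c) = w i • single i c := by
  simp [diagOp]

@[simp]
lemma diagOp_apply (w : ι → K) (v : ι →₀ K) (i : ι) : diagOp w v i = w i * v i := by
  induction v using Finsupp.induction_linear with
  | zero => simp
  | add v₁ v₂ h₁ h₂ => simp [h₁, h₂, mul_add]
  | single j c => by_cases hij : i = j <;> simp [hij]

variable {w w' : ι → K}

lemma eq_zero_of_diagOp_mul_sub {t : K} {u : Module.End K (ι →₀ K)}
    (hw : ∀ i j, w' j ≠ w i + t) (hu : diagOp w' * u - u * diagOp w = t • u) : u = 0 := by
  ext i j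
  have hij := congrArg (· j) (LinearMap.congr_fun hu (single i 1))
  simp only [LinearMap.sub_apply, Module.End.mul_apply, diagOp_single, map_smul,
    LinearMap.smul_apply, Finsupp.sub_apply, Finsupp.smul_apply, diagOp_apply,
    smul_eq_mul] at hij
  have : (w' j - (w i + t)) * u (single i 1) j = 0 := by linear_combination hij
  simpa [sub_ne_zero.mpr (hw i j)] using this

lemma exists_diagOp_mul_sub_eq (hw : ∀ i j, w' j ≠ w i) (c : Module.End K (ι →₀ K)) :
    ∃ φ, diagOp w' * φ - φ * diagOp w = c := by
  refine ⟨lsum K fun i => diagOp (fun j => (w' j - w i)⁻¹) ∘ₗ c ∘ₗ lsingle i, ?_⟩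
  ext i j
  have hc : c (single i (w i)) = w i • c (single i 1) := by
    rw [← map_smul, smul_single_one]
  simp only [LinearMap.coe_comp, Function.comp_apply, lsingle_apply, LinearMap.sub_apply,
    Module.End.mul_apply, coe_lsum, map_zero, sum_single_index, diagOp_single,
    smul_single, smul_eq_mul, mul_one, hc, map_smul, coe_sub, coe_smul, Pi.sub_apply,
    diagOp_apply, Pi.smul_apply]
  rw [← sub_mul, ← mul_assoc, mul_inv_cancel₀ (sub_ne_zero.mpr (hw i j)), one_mul]

theorem exists_coboundary_of_diagOp {e' E e f' F f H : Module.End K (ι →₀ K)}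
    (hc : Sl2Relations (extOp (diagOp w') H (diagOp w)) (extOp e' E e) (extOp f' F f))
    (hw : ∀ t ∈ ({-2, 0, 2} : Set K), ∀ i j, w' j ≠ w i + t) :
    ∃ φ, H = diagOp w' * φ - φ * diagOp w ∧ E = e' * φ - φ * e ∧ F = f' * φ - φ * f := by
  obtain ⟨φ, hφ⟩ := exists_diagOp_mul_sub_eq (by simpa using hw 0 (by simp)) H
  have hc' := hc.sub_coboundary φ
  rw [hφ, sub_self] at hc'
  obtain ⟨-, -, hE, hF, -⟩ := sl2Relations_extOp_iff.mp hc'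
  simp only [zero_mul, mul_zero, sub_self, zero_add] at hE hF
  refine ⟨φ, hφ.symm, ?_, ?_⟩ <;> rw [← sub_eq_zero]
  · refine eq_zero_of_diagOp_mul_sub (hw 2 (by simp)) ?_
    rw [← hE, two_mul, two_smul]
  · refine eq_zero_of_diagOp_mul_sub (hw (-2) (by simp)) ?_
    rw [← hF, two_mul]
    module

end Diagonal

lemma exists_ne_zero_forall_add_one_eq_mul {K : Type*} [Field K] {r : ℤ → K}
    (hr : ∀ k, r k ≠ 0) : ∃ s : ℤ → K, (∀ k, s k ≠ 0) ∧ ∀ k, s (k + 1) = r k * s k := by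
  have hprod : ∀ I : Finset ℤ, ∏ i ∈ I, r i ≠ 0 := fun I =>
    Finset.prod_ne_zero_iff.2 fun i _ => hr i
  refine ⟨fun k => (∏ i ∈ Finset.Ico 0 k, r i) / ∏ i ∈ Finset.Ico k 0, r i,
    fun k => div_ne_zero (hprod _) (hprod _), fun k => ?_⟩
  beta_reduce
  rcases le_or_gt 0 k with hk | hk
  · rw [Finset.Ico_eq_empty_of_le (by omega : 0 ≤ k + 1), Finset.Ico_eq_empty_of_le hk,
      ← Finset.insert_Ico_right_eq_Ico_add_one hk, Finset.prod_insert (by simp)]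
    simp
  · rw [Finset.Ico_eq_empty_of_le (by omega : k + 1 ≤ 0), Finset.Ico_eq_empty_of_le hk.le,
      ← Finset.insert_Ico_add_one_left_eq_Ico hk, Finset.prod_insert (by simp)]
    field_simp [hr k, hprod (Finset.Ico (k + 1) 0)]

section CuspidalModule

open Finsupp

variable {a₁ a₂ b₁ b₂ : ℂ}

@[simp]
lemma sl2H_single (a₁ a₂ : ℂ) (k : ℤ) (c : ℂ) :
    sl2H a₁ a₂ (single k c) = (a₁ - a₂ + 2 * (k : ℂ)) • single k c := by
  simp [sl2H]

@[simp]
lemma sl2E_single (a₂ : ℂ) (k : ℤ) (c : ℂ) :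
    sl2E a₂ (single k c) = (a₂ - (k : ℂ)) • single (k + 1) c := by
  simp [sl2E]

@[simp]
lemma sl2F_single (a₁ : ℂ) (k : ℤ) (c : ℂ) :
    sl2F a₁ (single k c) = (a₁ + (k : ℂ)) • single (k - 1) c := by
  simp [sl2F]

lemma sl2Relations_sl2 (a₁ a₂ : ℂ) : Sl2Relations (sl2H a₁ a₂) (sl2E a₂) (sl2F a₁) := by
  refine ⟨?_, ?_, ?_⟩ <;> apply lhom_ext <;> intro k c <;>
    simp only [LinearMap.sub_apply, LinearMap.neg_apply, Module.End.mul_apply,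
      Module.End.ofNat_apply, sl2H_single, sl2E_single, sl2F_single, map_smul, smul_smul,
      add_sub_cancel_right, sub_add_cancel] <;> push_cast <;> module

lemma casimir_sl2 (a₁ a₂ : ℂ) :
    casimir (sl2H a₁ a₂) (sl2E a₂) (sl2F a₁) =
      algebraMap ℂ (Module.End ℂ (ℤ →₀ ℂ)) ((a₁ + a₂) * (a₁ + a₂ + 2)) := by
  apply lhom_ext; intro k c
  simp only [casimir, LinearMap.add_apply, Module.End.mul_apply, Module.End.ofNat_apply,
    Module.algebraMap_end_apply, sl2H_single, sl2E_single, sl2F_single, map_smul, map_add,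
    smul_smul, add_sub_cancel_right, sub_add_cancel]
  push_cast
  module

lemma exists_sl2_linearEquiv_of_shift (m : ℤ) {s : ℤ → ℂ} (hs : ∀ k, s k ≠ 0)
    (hH : b₁ - b₂ = a₁ - a₂ + 2 * m)
    (hE : ∀ k : ℤ, (a₂ - k) * s (k + 1) = (b₂ - (k - m)) * s k)
    (hF : ∀ k : ℤ, (a₁ + k) * s (k - 1) = (b₁ + (k - m)) * s k) :
    ∃ e : (ℤ →₀ ℂ) ≃ₗ[ℂ] (ℤ →₀ ℂ),
      (∀ v, e (sl2H a₁ a₂ v) = sl2H b₁ b₂ (e v)) ∧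
      (∀ v, e (sl2E a₂ v) = sl2E b₂ (e v)) ∧
      (∀ v, e (sl2F a₁ v) = sl2F b₁ (e v)) := by
  let A : Module.End ℂ (ℤ →₀ ℂ) := lsum ℂ fun k => s k • lsingle (k - m)
  let B : Module.End ℂ (ℤ →₀ ℂ) := lsum ℂ fun k => (s (k + m))⁻¹ • lsingle (k + m)
  have hA : ∀ k c, A (single k c) = s k • single (k - m) c := fun k c => by simp [A]
  have hB : ∀ k c, B (single k c) = (s (k + m))⁻¹ • single (k + m) c := fun k c => by
    simp [B]
  have hAB : A ∘ₗ B = LinearMap.id := lhom_ext fun k c => by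
    simp only [LinearMap.comp_apply, hB, map_smul, hA, add_sub_cancel_right, smul_smul,
      inv_mul_cancel₀ (hs (k + m)), one_smul, LinearMap.id_apply]
  have hBA : B ∘ₗ A = LinearMap.id := lhom_ext fun k c => by
    simp only [LinearMap.comp_apply, hA, map_smul, hB, sub_add_cancel, smul_smul,
      mul_inv_cancel₀ (hs k), one_smul, LinearMap.id_apply]
  have intertwines : ∀ X X' : Module.End ℂ (ℤ →₀ ℂ),
      (∀ k c, A (X (single k c)) = X' (A (single k c))) → ∀ v, A (X v) = X' (A v) :=
    fun X X' h v => LinearMap.congr_fun (lhom_ext h : A ∘ₗ X = X' ∘ₗ A) v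
  refine ⟨.ofLinearMap A B hAB hBA, intertwines _ _ fun k c => ?_,
    intertwines _ _ fun k c => ?_, intertwines _ _ fun k c => ?_⟩ <;>
    simp only [sl2H_single, sl2E_single, sl2F_single, map_smul, hA, smul_smul]
  · congr 1; push_cast; linear_combination -s k * hH
  · rw [show k + 1 - m = k - m + 1 by ring, hE]; congr 1; push_cast; ring
  · rw [show k - 1 - m = k - m - 1 by ring, hF]; congr 1; push_cast; ring

theorem exists_sl2_linearEquiv (ha₁ : ∀ n : ℤ, a₁ ≠ (n : ℂ)) (ha₂ : ∀ n : ℤ, a₂ ≠ (n : ℂ))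
    (m : ℤ) (hm : b₁ - b₂ = a₁ - a₂ + 2 * m)
    (hz : (b₁ + b₂) * (b₁ + b₂ + 2) = (a₁ + a₂) * (a₁ + a₂ + 2)) :
    ∃ e : (ℤ →₀ ℂ) ≃ₗ[ℂ] (ℤ →₀ ℂ),
      (∀ v, e (sl2H a₁ a₂ v) = sl2H b₁ b₂ (e v)) ∧
      (∀ v, e (sl2E a₂ v) = sl2E b₂ (e v)) ∧
      (∀ v, e (sl2F a₁ v) = sl2F b₁ (e v)) := by
  have hfac : (b₁ + b₂ - (a₁ + a₂)) * (b₁ + b₂ + (a₁ + a₂) + 2) = 0 := by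
    linear_combination hz
  rcases mul_eq_zero.1 hfac with hsum | hsum
  · refine exists_sl2_linearEquiv_of_shift m (s := 1) (fun _ => one_ne_zero) hm
      (fun k => ?_) (fun k => ?_) <;> simp only [Pi.one_apply, mul_one]
    · linear_combination (hm - hsum) / 2
    · linear_combination -(hsum + hm) / 2
  · have hden : ∀ k : ℤ, a₂ - k ≠ 0 := fun k => sub_ne_zero.2 (ha₂ k)
    have hnum : ∀ k : ℤ, a₁ + k + 1 ≠ 0 := fun k h =>
      ha₁ (-k - 1) (by push_cast; linear_combination h)
    obtain ⟨s, hs0, hrec⟩ := exists_ne_zero_forall_add_one_eq_mul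
      (r := fun k : ℤ => -(a₁ + k + 1) / (a₂ - k))
      fun k => div_ne_zero (neg_ne_zero.2 (hnum k)) (hden k)
    refine exists_sl2_linearEquiv_of_shift m hs0 hm (fun k => ?_) (fun k => ?_)
    · rw [hrec]
      field_simp [hden k]
      linear_combination -s k * (hsum - hm) / 2
    · have hden' : a₂ - (k - 1 : ℂ) ≠ 0 := by simpa using hden (k - 1)
      have hrec' := hrec (k - 1)
      rw [sub_add_cancel] at hrec'
      rw [hrec']
      push_cast
      field_simp [hden']
      linear_combination (a₁ + k) * s (k - 1) * (hsum + hm) / 2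

lemma sl2_weight_ne_add (hw : ∀ m : ℤ, b₁ - b₂ ≠ a₁ - a₂ + 2 * m) :
    ∀ t ∈ ({-2, 0, 2} : Set ℂ), ∀ i j : ℤ,
      b₁ - b₂ + 2 * (j : ℂ) ≠ a₁ - a₂ + 2 * (i : ℂ) + t := by
  rintro t (rfl | rfl | rfl) i j h
  exacts [hw (i - j - 1) (by push_cast; linear_combination h),
    hw (i - j) (by push_cast; linear_combination h),
    hw (i - j + 1) (by push_cast; linear_combination h)]

end CuspidalModule

theorem stmt_17_general (a₁ a₂ b₁ b₂ : ℂ)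
    (ha₁ : ∀ n : ℤ, a₁ ≠ (n : ℂ)) (ha₂ : ∀ n : ℤ, a₂ ≠ (n : ℂ))
    -- `N(a) ≇ N(b)`: there is no linear isomorphism intertwining the two actions
    (hniso : ¬ ∃ e : (ℤ →₀ ℂ) ≃ₗ[ℂ] (ℤ →₀ ℂ),
      (∀ v, e (sl2H a₁ a₂ v) = sl2H b₁ b₂ (e v)) ∧
      (∀ v, e (sl2E a₂ v) = sl2E b₂ (e v)) ∧
      (∀ v, e (sl2F a₁ v) = sl2F b₁ (e v)))
    -- a cocycle from `M = N(a)` to `N = N(b)`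
    (cH cE cF : (ℤ →₀ ℂ) →ₗ[ℂ] (ℤ →₀ ℂ))
    -- `c(⁅H,X⁺⁆) = 2 c(X⁺) = [c(H), X⁺] + [H, c(X⁺)]`
    (hcHE : (2 : ℂ) • cE =
      (cH ∘ₗ sl2E a₂ - sl2E b₂ ∘ₗ cH) + (sl2H b₁ b₂ ∘ₗ cE - cE ∘ₗ sl2H a₁ a₂))
    -- `c(⁅H,X⁻⁆) = -2 c(X⁻) = [c(H), X⁻] + [H, c(X⁻)]`
    (hcHF : (-2 : ℂ) • cF =
      (cH ∘ₗ sl2F a₁ - sl2F b₁ ∘ₗ cH) + (sl2H b₁ b₂ ∘ₗ cF - cF ∘ₗ sl2H a₁ a₂))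
    -- `c(⁅X⁺,X⁻⁆) = c(H) = [c(X⁺), X⁻] + [X⁺, c(X⁻)]`
    (hcEF : cH =
      (cE ∘ₗ sl2F a₁ - sl2F b₁ ∘ₗ cE) + (sl2E b₂ ∘ₗ cF - cF ∘ₗ sl2E a₂)) :
    -- the cocycle is a coboundary
    ∃ φ : (ℤ →₀ ℂ) →ₗ[ℂ] (ℤ →₀ ℂ),
      cH = sl2H b₁ b₂ ∘ₗ φ - φ ∘ₗ sl2H a₁ a₂ ∧
      cE = sl2E b₂ ∘ₗ φ - φ ∘ₗ sl2E a₂ ∧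
      cF = sl2F b₁ ∘ₗ φ - φ ∘ₗ sl2F a₁ := by
  have hc := sl2Relations_extOp_iff.mpr ⟨sl2Relations_sl2 b₁ b₂, sl2Relations_sl2 a₁ a₂,
    by rw [← show (2 : ℂ) • cE = 2 * cE by rw [two_mul]; module]; exact hcHE,
    by rw [← show (-2 : ℂ) • cF = -(2 * cF) by rw [two_mul]; module]; exact hcHF, hcEF⟩
  by_cases hw : ∃ m : ℤ, b₁ - b₂ = a₁ - a₂ + 2 * m
  · obtain ⟨m, hm⟩ := hw
    exact exists_coboundary_of_casimir_ne hc (casimir_sl2 a₁ a₂) (casimir_sl2 b₁ b₂)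
      fun hz => hniso (exists_sl2_linearEquiv ha₁ ha₂ m hm hz.symm)
  · push Not at hw
    exact exists_coboundary_of_diagOp hc (sl2_weight_ne_add hw)

/-- Grantcharov–Serganova.  Let `M = N(a)` and `N = N(b)` be simple
cuspidal `sl(2,ℂ)`-modules (`a, b ∈ (ℂ ∖ ℤ)²`).  If `M` and `N` are not isomorphic as
`sl(2,ℂ)`-modules, then every cocycle from `M` to `N` is a coboundary — equivalently,
every extension `0 → N → V → M → 0` of weight `sl(2,ℂ)`-modules splits.
A cocycle is given by its values `cH, cE, cF` on the basis `H, X⁺, X⁻` of `sl₂`, subject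
to the relations `c(⁅X,Y⁆) = [c(X), Y] + [X, c(Y)]`, where
`[c(X), Y] = c(X) ∘ Y_M − Y_N ∘ c(X)`; it is a coboundary when `c(X) = [X, φ]`, i.e.
`c(X) = X_N ∘ φ − φ ∘ X_M`, for some linear map `φ : M → N`. -/
theorem stmt_17 (a₁ a₂ b₁ b₂ : ℂ)
    (ha₁ : ∀ n : ℤ, a₁ ≠ (n : ℂ)) (ha₂ : ∀ n : ℤ, a₂ ≠ (n : ℂ))
    (hb₁ : ∀ n : ℤ, b₁ ≠ (n : ℂ)) (hb₂ : ∀ n : ℤ, b₂ ≠ (n : ℂ))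
    -- `N(a) ≇ N(b)`: there is no linear isomorphism intertwining the two actions
    (hniso : ¬ ∃ e : (ℤ →₀ ℂ) ≃ₗ[ℂ] (ℤ →₀ ℂ),
      (∀ v, e (sl2H a₁ a₂ v) = sl2H b₁ b₂ (e v)) ∧
      (∀ v, e (sl2E a₂ v) = sl2E b₂ (e v)) ∧
      (∀ v, e (sl2F a₁ v) = sl2F b₁ (e v)))
    -- a cocycle from `M = N(a)` to `N = N(b)`
    (cH cE cF : (ℤ →₀ ℂ) →ₗ[ℂ] (ℤ →₀ ℂ))
    -- `c(⁅H,X⁺⁆) = 2 c(X⁺) = [c(H), X⁺] + [H, c(X⁺)]`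
    (hcHE : (2 : ℂ) • cE =
      (cH ∘ₗ sl2E a₂ - sl2E b₂ ∘ₗ cH) + (sl2H b₁ b₂ ∘ₗ cE - cE ∘ₗ sl2H a₁ a₂))
    -- `c(⁅H,X⁻⁆) = -2 c(X⁻) = [c(H), X⁻] + [H, c(X⁻)]`
    (hcHF : (-2 : ℂ) • cF =
      (cH ∘ₗ sl2F a₁ - sl2F b₁ ∘ₗ cH) + (sl2H b₁ b₂ ∘ₗ cF - cF ∘ₗ sl2H a₁ a₂))
    -- `c(⁅X⁺,X⁻⁆) = c(H) = [c(X⁺), X⁻] + [X⁺, c(X⁻)]`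
    (hcEF : cH =
      (cE ∘ₗ sl2F a₁ - sl2F b₁ ∘ₗ cE) + (sl2E b₂ ∘ₗ cF - cF ∘ₗ sl2E a₂)) :
    -- the cocycle is a coboundary
    ∃ φ : (ℤ →₀ ℂ) →ₗ[ℂ] (ℤ →₀ ℂ),
      cH = sl2H b₁ b₂ ∘ₗ φ - φ ∘ₗ sl2H a₁ a₂ ∧
      cE = sl2E b₂ ∘ₗ φ - φ ∘ₗ sl2E a₂ ∧
      cF = sl2F b₁ ∘ₗ φ - φ ∘ₗ sl2F a₁ :=
  stmt_17_general a₁ a₂ b₁ b₂ ha₁ ha₂ hniso cH cE cF hcHE hcHF hcEF
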